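/- arXiv:1909.02920 — 8 statements merged into one kernel-verified Lean document; each statement's English description precedes it below -/
import Mathlib

section
/- If M is an IB-homogeneous graph and g : X → Y is an isomorphism between finite induced subgraphs of M, then the inverse isomorphism g⁻¹ : Y → X extends to an antibimorphism of M (a bijection M → M preserving nonedges). -/
/-- A bimorphism of a graph: a bijective edge-preserving self-map. -/
def IsBimorphism {V : Type*} (G : SimpleGraph V) (F : V → V) : Prop :=
  Function.Bijective F ∧ ∀ u v, G.Adj u v → G.Adj (F u) (F v)

/-- A partial isomorphism of `G` with finite domain `S`. -/
def IsPartialIso {V : Type*} (G : SimpleGraph V) (S : Finset V) (f : V → V) : Prop :=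
  Set.InjOn f S ∧ ∀ u ∈ S, ∀ v ∈ S, (G.Adj u v ↔ G.Adj (f u) (f v))

/-- `G` is IB-homogeneous: every isomorphism between finite induced subgraphs
extends to a bimorphism of `G`. -/
def IBHom {V : Type*} (G : SimpleGraph V) : Prop :=
  ∀ (S : Finset V) (f : V → V), IsPartialIso G S f →
    ∃ F : V → V, IsBimorphism G F ∧ ∀ x ∈ S, F x = f x

/-- `G` represents the monomorphism `m`: some bimorphism maps a nonedge to an edge. -/
def RepM {V : Type*} (G : SimpleGraph V) : Prop :=
  ∃ F : V → V, IsBimorphism G F ∧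
    ∃ u v : V, u ≠ v ∧ ¬ G.Adj u v ∧ G.Adj (F u) (F v)

/-- An independent set: pairwise nonadjacent vertices. -/
def IsIndep {V : Type*} (G : SimpleGraph V) (s : Set V) : Prop :=
  s.Pairwise fun u v => ¬ G.Adj u v

namespace IsBimorphism

variable {V : Type*} {G : SimpleGraph V} {F : V → V}

noncomputable def inv (hF : IsBimorphism G F) : Equiv.Perm V :=
  (Equiv.ofBijective F hF.1).symm

theorem apply_inv (hF : IsBimorphism G F) (v : V) : F (hF.inv v) = v :=
  Equiv.ofBijective_apply_symm_apply F hF.1 v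

theorem inv_apply (hF : IsBimorphism G F) (v : V) : hF.inv (F v) = v :=
  Equiv.ofBijective_symm_apply_apply F hF.1 v

theorem not_adj_inv (hF : IsBimorphism G F) {u v : V} (huv : ¬ G.Adj u v) :
    ¬ G.Adj (hF.inv u) (hF.inv v) :=
  fun h => huv (by simpa only [hF.apply_inv] using hF.2 _ _ h)

end IsBimorphism

/-- In an IB-homogeneous graph, the inverse of a finite partial isomorphism extends to an
antibimorphism of `M`. -/
theorem stmt2 {V : Type*} (M : SimpleGraph V) (hM : IBHom M)
    (S : Finset V) (f : V → V) (hf : IsPartialIso M S f) :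
    ∃ F : V → V, Function.Bijective F ∧
      (∀ u v : V, u ≠ v → ¬ M.Adj u v → ¬ M.Adj (F u) (F v)) ∧
      ∀ x ∈ S, F (f x) = x := by
  obtain ⟨F, hF, hFf⟩ := hM S f hf
  refine ⟨hF.inv, hF.inv.bijective, fun _ _ _ huv => hF.not_adj_inv huv, fun x hx => ?_⟩
  rw [← hFf x hx, hF.inv_apply]
end

section
/- If G is an IB-homogeneous graph, then the complement of G is also IB-homogeneous. -/
/-!
A partial isomorphism of `Gᶜ` is one of `G`, and so is its inverse. Extending that inverse to a
bimorphism `H` of `G` and inverting `H` gives the required bimorphism of `Gᶜ`: since `H` is a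
bijection sending edges to edges, `H⁻¹` sends non-edges to non-edges.
-/

section

variable {V : Type*} {G : SimpleGraph V} {S : Finset V} {f : V → V}

theorem IsPartialIso.compl (hf : IsPartialIso G S f) : IsPartialIso Gᶜ S f := by
  refine ⟨hf.1, fun u hu v hv => ?_⟩
  have hne : u ≠ v ↔ f u ≠ f v := (hf.1.eq_iff hu hv).not.symm
  simp only [SimpleGraph.compl_adj, hne, hf.2 u hu v hv]

@[simp]
theorem isPartialIso_compl : IsPartialIso Gᶜ S f ↔ IsPartialIso G S f :=
  ⟨fun hf => compl_compl G ▸ hf.compl, IsPartialIso.compl⟩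

theorem IsPartialIso.exists_leftInverse [DecidableEq V] (hf : IsPartialIso G S f) :
    ∃ g : V → V, IsPartialIso G (S.image f) g ∧ ∀ x ∈ S, g (f x) = x := by
  rcases isEmpty_or_nonempty V with _ | _
  · exact ⟨id, ⟨Set.injOn_id _, fun u => isEmptyElim u⟩, fun x => isEmptyElim x⟩
  have hgf : ∀ x ∈ S, Function.invFunOn f S (f x) = x := fun x hx =>
    hf.1.leftInvOn_invFunOn hx
  refine ⟨Function.invFunOn f S, ⟨?_, ?_⟩, hgf⟩
  · rw [Finset.coe_image]
    rintro _ ⟨x, hx, rfl⟩ _ ⟨y, hy, rfl⟩ hxy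
    rw [hgf x hx, hgf y hy] at hxy
    rw [hxy]
  · simp only [Finset.mem_image]
    rintro _ ⟨x, hx, rfl⟩ _ ⟨y, hy, rfl⟩
    rw [hgf x hx, hgf y hy, hf.2 x hx y hy]

theorem IsBimorphism.compl_symm {e : V ≃ V} (he : IsBimorphism G e) :
    IsBimorphism Gᶜ e.symm := by
  refine ⟨e.symm.bijective, fun u v huv => ⟨e.symm.injective.ne huv.1, fun hadj => huv.2 ?_⟩⟩
  simpa using he.2 _ _ hadj

end

/-- The complement of an IB-homogeneous graph is IB-homogeneous. -/
theorem stmt3 {V : Type*} (G : SimpleGraph V) (hG : IBHom G) : IBHom Gᶜ := by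
  classical
  intro S f hf
  obtain ⟨g, hg, hgf⟩ := (isPartialIso_compl.1 hf).exists_leftInverse
  obtain ⟨H, hH, hHg⟩ := hG _ g hg
  let e := Equiv.ofBijective H hH.1
  refine ⟨e.symm, IsBimorphism.compl_symm (e := e) hH, fun x hx => ?_⟩
  rw [e.symm_apply_eq]
  exact ((hHg (f x) (Finset.mem_image_of_mem f hx)).trans (hgf x hx)).symm
end

section
/- Let G be an IB-homogeneous graph in which no bimorphism maps a nonedge to an edge. Then every bimorphism of G is an automorphism, and consequently G is ultrahomogeneous: every isomorphism between finite induced subgraphs extends to an automorphism of G. -/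
theorem SimpleGraph.adj_iff_adj_of_map_adj_of_map_nonadj {V : Type*} {G : SimpleGraph V}
    {F : V → V} (hadj : ∀ u v, G.Adj u v → G.Adj (F u) (F v))
    (hnonadj : ∀ u v, u ≠ v → ¬ G.Adj u v → ¬ G.Adj (F u) (F v)) (u v : V) :
    G.Adj u v ↔ G.Adj (F u) (F v) := by
  refine ⟨hadj u v, not_imp_not.mp fun huv => ?_⟩
  rcases eq_or_ne u v with rfl | hne
  · exact G.irrefl
  · exact hnonadj u v hne huv

/-- If `G` is IB-homogeneous and no bimorphism maps a nonedge to an edge, then every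
bimorphism of `G` is an automorphism and `G` is ultrahomogeneous. -/
theorem stmt4 {V : Type*} (G : SimpleGraph V) (hG : IBHom G)
    (hm : ∀ F : V → V, IsBimorphism G F →
      ∀ u v : V, u ≠ v → ¬ G.Adj u v → ¬ G.Adj (F u) (F v)) :
    (∀ F : V → V, IsBimorphism G F →
      Function.Bijective F ∧ ∀ u v : V, G.Adj u v ↔ G.Adj (F u) (F v)) ∧
    (∀ (S : Finset V) (f : V → V), IsPartialIso G S f →
      ∃ F : V → V, Function.Bijective F ∧
        (∀ u v : V, G.Adj u v ↔ G.Adj (F u) (F v)) ∧ ∀ x ∈ S, F x = f x) := by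
  have hAut : ∀ F : V → V, IsBimorphism G F →
      Function.Bijective F ∧ ∀ u v : V, G.Adj u v ↔ G.Adj (F u) (F v) := fun F hF =>
    ⟨hF.1, SimpleGraph.adj_iff_adj_of_map_adj_of_map_nonadj hF.2 (hm F hF)⟩
  refine ⟨hAut, fun S f hf => ?_⟩
  obtain ⟨F, hF, hFf⟩ := hG S f hf
  exact ⟨F, (hAut F hF).1, (hAut F hF).2, hFf⟩
end

section
/- If G is an IB-homogeneous graph with some bimorphism mapping a nonedge to an edge, then the complement of G also has a bimorphism mapping a nonedge to an edge. -/
theorem IsBimorphism.symm_compl {V : Type*} {G : SimpleGraph V} {F : V → V}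
    (hF : IsBimorphism G F) : IsBimorphism Gᶜ (Equiv.ofBijective F hF.1).symm := by
  set e := Equiv.ofBijective F hF.1
  refine ⟨e.symm.bijective, fun x y ⟨hne, hnadj⟩ => ⟨e.symm.injective.ne hne, fun hadj => ?_⟩⟩
  have h : G.Adj (e (e.symm x)) (e (e.symm y)) := hF.2 _ _ hadj
  rw [e.apply_symm_apply, e.apply_symm_apply] at h
  exact hnadj h

theorem RepM.compl {V : Type*} {G : SimpleGraph V} (hG : RepM G) : RepM Gᶜ := by
  obtain ⟨F, hF, u, v, hne, hnadj, hadj⟩ := hG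
  set e := Equiv.ofBijective F hF.1
  refine ⟨e.symm, hF.symm_compl, F u, F v, hadj.ne, fun h => h.2 hadj, ?_⟩
  change Gᶜ.Adj (e.symm (e u)) (e.symm (e v))
  rw [e.symm_apply_apply, e.symm_apply_apply]
  exact ⟨hne, hnadj⟩

theorem stmt5_general {V : Type*} (G : SimpleGraph V) (hm : RepM G) : RepM Gᶜ :=
  hm.compl

/-- If an IB-homogeneous graph represents `m`, then so does its complement. -/
theorem stmt5 {V : Type*} (G : SimpleGraph V) (hG : IBHom G) (hm : RepM G) : RepM Gᶜ :=
  stmt5_general G hm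
end

section
/- Let G be an IB-homogeneous graph that represents m (some bimorphism maps a nonedge to an edge). Then for every finite subset X of G there exists a bimorphism F of G such that the image F(X) is a clique. -/
/-!
A bimorphism maps edges to edges, so every nonadjacent pair of distinct vertices of `F '' X` is
the image of one of `X`; if `F` also turns some nonadjacent pair of `X` into an edge, `F '' X`
has strictly fewer nonadjacent pairs than `X`. Such an `F` exists for every nonadjacent pair:
extend the partial isomorphism sending it onto the nonedge that the bimorphism given by `RepM`
maps to an edge, and follow it by that bimorphism. Induction on the number of nonadjacent pairs
then makes `X` a clique.
-/

section

variable {V : Type*} {G : SimpleGraph V}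

lemma IsBimorphism.id : IsBimorphism G id :=
  ⟨Function.bijective_id, fun _ _ h => h⟩

lemma IsBimorphism.comp {F F' : V → V} (hF' : IsBimorphism G F') (hF : IsBimorphism G F) :
    IsBimorphism G (F' ∘ F) :=
  ⟨hF'.1.comp hF.1, fun _ _ h => hF'.2 _ _ (hF.2 _ _ h)⟩

lemma isPartialIso_pair [DecidableEq V] {u v : V} {f : V → V} (hf : f u ≠ f v)
    (hadj : G.Adj u v ↔ G.Adj (f u) (f v)) : IsPartialIso G {u, v} f := by
  refine ⟨?_, ?_⟩
  · intro x hx y hy hxy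
    simp only [Finset.coe_insert, Finset.coe_singleton, Set.mem_insert_iff,
      Set.mem_singleton_iff] at hx hy
    rcases hx with rfl | rfl <;> rcases hy with rfl | rfl
    exacts [rfl, absurd hxy hf, absurd hxy.symm hf, rfl]
  · intro x hx y hy
    simp only [Finset.mem_insert, Finset.mem_singleton] at hx hy
    rcases hx with rfl | rfl <;> rcases hy with rfl | rfl
    · simp
    · exact hadj
    · rw [G.adj_comm, hadj, G.adj_comm]
    · simp

lemma IBHom.exists_isBimorphism_adj (hG : IBHom G) (hm : RepM G) {u v : V} (huv : u ≠ v)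
    (hna : ¬ G.Adj u v) : ∃ F : V → V, IsBimorphism G F ∧ G.Adj (F u) (F v) := by
  classical
  obtain ⟨F₀, hF₀, a, b, hab, hnab, hF₀ab⟩ := hm
  let f : V → V := fun x => if x = u then a else b
  have hfu : f u = a := if_pos rfl
  have hfv : f v = b := if_neg huv.symm
  have hf : IsPartialIso G {u, v} f :=
    isPartialIso_pair (by rwa [hfu, hfv]) (by rw [hfu, hfv]; exact iff_of_false hna hnab)
  obtain ⟨H, hH, hHf⟩ := hG {u, v} f hf
  refine ⟨F₀ ∘ H, hF₀.comp hH, ?_⟩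
  simpa only [Function.comp_apply, hHf u (by simp), hHf v (by simp), hfu, hfv] using hF₀ab

section NonAdjPairs

variable [DecidableRel G.Adj]

variable (G) in
def nonAdjPairs (X : Finset V) : Finset (V × V) :=
  X.offDiag.filter fun p => ¬ G.Adj p.1 p.2

lemma mem_nonAdjPairs {X : Finset V} {p : V × V} :
    p ∈ nonAdjPairs G X ↔ p.1 ∈ X ∧ p.2 ∈ X ∧ p.1 ≠ p.2 ∧ ¬ G.Adj p.1 p.2 := by
  simp [nonAdjPairs, and_assoc]

lemma isClique_of_nonAdjPairs_eq_empty {X : Finset V} (hX : nonAdjPairs G X = ∅) :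
    G.IsClique (X : Set V) := by
  intro x hx y hy hxy
  by_contra hna
  exact Finset.notMem_empty (x, y) (hX ▸ mem_nonAdjPairs.2 ⟨hx, hy, hxy, hna⟩)

lemma nonAdjPairs_image_subset [DecidableEq V] {F : V → V}
    (hF : ∀ x y, G.Adj x y → G.Adj (F x) (F y)) {X : Finset V} {u v : V}
    (hFuv : G.Adj (F u) (F v)) :
    nonAdjPairs G (X.image F) ⊆ ((nonAdjPairs G X).erase (u, v)).image (Prod.map F F) := by
  rintro ⟨p₁, p₂⟩ hp
  obtain ⟨hp₁, hp₂, hne, hna⟩ := mem_nonAdjPairs.1 hp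
  obtain ⟨x, hx, rfl⟩ := Finset.mem_image.1 hp₁
  obtain ⟨y, hy, rfl⟩ := Finset.mem_image.1 hp₂
  have hxy : (x, y) ≠ (u, v) := by
    rintro ⟨⟩
    exact hna hFuv
  refine Finset.mem_image.2 ⟨(x, y), Finset.mem_erase.2 ⟨hxy, ?_⟩, rfl⟩
  exact mem_nonAdjPairs.2 ⟨hx, hy, fun h => hne (congrArg F h), fun h => hna (hF _ _ h)⟩

lemma card_nonAdjPairs_image_lt [DecidableEq V] {F : V → V}
    (hF : ∀ x y, G.Adj x y → G.Adj (F x) (F y)) {X : Finset V} {u v : V}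
    (huv : (u, v) ∈ nonAdjPairs G X) (hFuv : G.Adj (F u) (F v)) :
    (nonAdjPairs G (X.image F)).card < (nonAdjPairs G X).card :=
  calc (nonAdjPairs G (X.image F)).card
      ≤ (((nonAdjPairs G X).erase (u, v)).image (Prod.map F F)).card :=
        Finset.card_le_card (nonAdjPairs_image_subset hF hFuv)
    _ ≤ ((nonAdjPairs G X).erase (u, v)).card := Finset.card_image_le
    _ < (nonAdjPairs G X).card := Finset.card_erase_lt_of_mem huv

end NonAdjPairs

end

/-- In an IB-homogeneous graph representing `m`, every finite set is mapped to a clique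
by some bimorphism. -/
theorem stmt6 {V : Type*} (G : SimpleGraph V) (hG : IBHom G) (hm : RepM G)
    (X : Finset V) :
    ∃ F : V → V, IsBimorphism G F ∧ G.IsClique (F '' ↑X) := by
  classical
  induction hn : (nonAdjPairs G X).card using Nat.strong_induction_on generalizing X with
  | _ n ih =>
    obtain hX | ⟨⟨u, v⟩, huv⟩ := (nonAdjPairs G X).eq_empty_or_nonempty
    · exact ⟨id, IsBimorphism.id, by simpa using isClique_of_nonAdjPairs_eq_empty hX⟩
    obtain ⟨-, -, hne, hna⟩ := mem_nonAdjPairs.1 huv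
    obtain ⟨F, hF, hFuv⟩ := hG.exists_isBimorphism_adj hm hne hna
    obtain ⟨F', hF', hclique⟩ :=
      ih _ (hn ▸ card_nonAdjPairs_image_lt hF.2 huv hFuv) (X.image F) rfl
    refine ⟨F' ∘ F, hF'.comp hF, ?_⟩
    rwa [Set.image_comp, ← Finset.coe_image]
end

section
/- Let G be an IB-homogeneous graph that represents m (some bimorphism maps a nonedge to an edge). Then G has no finite maximal independent set: for every finite independent set A in G there is a vertex outside A adjacent to no vertex of A. -/
/-!
Permutations reflecting adjacency are exactly the inverses of bimorphisms. Since `G` represents `m`,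
a bimorphism `F` maps some nonedge `u₀ v₀` to an edge, and by IB-homogeneity every edge `x y` is
the image of `F u₀, F v₀` under a bimorphism `H`; so `(H ∘ F)⁻¹` reflects adjacency and turns the
edge `x y` into the nonedge `u₀ v₀`. Such permutations never create edges, so composing finitely
many of them sends `A ∪ {w}`, for any `w ∉ A`, to an independent set `C (A ∪ {w})`. Extending
`C|_A`, an isomorphism between independent sets, to a bimorphism `H`, the vertex `H⁻¹ (C w)` is a
co-cone over `A`.
-/

namespace SimpleGraph

def adjReflectingPerms {V : Type*} (G : SimpleGraph V) : Submonoid (Equiv.Perm V) where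
  carrier := {C | ∀ x y, G.Adj (C x) (C y) → G.Adj x y}
  one_mem' _ _ h := h
  mul_mem' hC hD x y h := hD x y (hC _ _ h)

end SimpleGraph

section

variable {V : Type*} {G : SimpleGraph V}

theorem IsBimorphism.symm_ofBijective_mem_adjReflectingPerms {F : V → V}
    (hF : IsBimorphism G F) : (Equiv.ofBijective F hF.1).symm ∈ G.adjReflectingPerms :=
  fun x y h => by
    simpa only [Equiv.ofBijective_apply_symm_apply] using hF.2 _ _ h

theorem IBHom.exists_isBimorphism_map_pair (hG : IBHom G) {a b x y : V} (hab : a ≠ b)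
    (hxy : x ≠ y) (h : G.Adj a b ↔ G.Adj x y) :
    ∃ H : V → V, IsBimorphism G H ∧ H a = x ∧ H b = y := by
  classical
  let f : V → V := Function.update (fun _ => y) a x
  have hfa : f a = x := Function.update_self ..
  have hfb : f b = y := Function.update_of_ne hab.symm ..
  have hf : IsPartialIso G {a, b} f := by
    refine ⟨?_, ?_⟩
    · intro u hu v hv huv
      simp only [Finset.coe_insert, Finset.coe_singleton, Set.mem_insert_iff,
        Set.mem_singleton_iff] at hu hv
      rcases hu with rfl | rfl <;> rcases hv with rfl | rfl <;> simp_all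
    · intro u hu v hv
      simp only [Finset.mem_insert, Finset.mem_singleton] at hu hv
      rcases hu with rfl | rfl <;> rcases hv with rfl | rfl <;> simp [hfa, hfb, h]
      exact (G.adj_comm _ _).trans (h.trans (G.adj_comm _ _))
  obtain ⟨H, hH, hHf⟩ := hG _ f hf
  exact ⟨H, hH, by simp [hHf, hfa], by simp [hHf, hfb]⟩

theorem exists_mem_adjReflectingPerms_not_adj (hG : IBHom G) (hm : RepM G) {x y : V}
    (hxy : G.Adj x y) : ∃ C ∈ G.adjReflectingPerms, ¬ G.Adj (C x) (C y) := by
  obtain ⟨F, hF, u₀, v₀, -, huv, hFuv⟩ := hm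
  obtain ⟨H, hH, hHu, hHv⟩ := hG.exists_isBimorphism_map_pair (G.ne_of_adj hFuv)
    (G.ne_of_adj hxy) (iff_of_true hFuv hxy)
  refine ⟨(Equiv.ofBijective F hF.1).symm * (Equiv.ofBijective H hH.1).symm,
    mul_mem hF.symm_ofBijective_mem_adjReflectingPerms
      hH.symm_ofBijective_mem_adjReflectingPerms, ?_⟩
  rw [← hHu, ← hHv]
  simpa using huv

theorem exists_mem_adjReflectingPerms_forall_not_adj (hG : IBHom G) (hm : RepM G)
    (P : Finset (V × V)) :
    ∃ C ∈ G.adjReflectingPerms, ∀ p ∈ P, ¬ G.Adj (C p.1) (C p.2) := by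
  classical
  induction P using Finset.induction_on with
  | empty => exact ⟨1, one_mem _, by simp⟩
  | insert p P _ ih =>
    obtain ⟨C, hC, hCP⟩ := ih
    by_cases hp : G.Adj (C p.1) (C p.2)
    · obtain ⟨D, hD, hDp⟩ := exists_mem_adjReflectingPerms_not_adj hG hm hp
      refine ⟨D * C, mul_mem hD hC, ?_⟩
      simp only [Finset.mem_insert, forall_eq_or_imp, Equiv.Perm.mul_apply]
      exact ⟨hDp, fun q hq h => hCP q hq (hD _ _ h)⟩
    · exact ⟨C, hC, by simpa [hp] using hCP⟩

theorem IsIndep.exists_notMem_of_adj {A : Set V} (hA : IsIndep G A) {x y : V}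
    (hxy : G.Adj x y) : ∃ w, w ∉ A := by
  by_contra! h
  exact hA (h x) (h y) (G.ne_of_adj hxy) hxy

end

/-- An IB-homogeneous graph representing `m` has no finite maximal independent set. -/
theorem stmt9 {V : Type*} (G : SimpleGraph V) (hG : IBHom G) (hm : RepM G)
    (A : Finset V) (hA : IsIndep G ↑A) :
    ∃ v : V, v ∉ A ∧ ∀ a ∈ A, ¬ G.Adj v a := by
  classical
  obtain ⟨w, hw⟩ : ∃ w, w ∉ A := by
    obtain ⟨F, -, u, v, -, -, hFuv⟩ := hm
    exact hA.exists_notMem_of_adj hFuv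
  obtain ⟨C, -, hC⟩ := exists_mem_adjReflectingPerms_forall_not_adj hG hm
    (insert w A ×ˢ insert w A)
  have hCA : ∀ a ∈ insert w A, ∀ b ∈ insert w A, ¬ G.Adj (C a) (C b) := fun a ha b hb =>
    hC (a, b) (Finset.mem_product.2 ⟨ha, hb⟩)
  have hCiso : IsPartialIso G A C := by
    refine ⟨C.injective.injOn, fun a ha b hb => ?_⟩
    rcases eq_or_ne a b with rfl | hab
    · simp
    · exact iff_of_false (hA ha hb hab) (hCA a (by simp [ha]) b (by simp [hb]))
  obtain ⟨H, hH, hHC⟩ := hG A C hCiso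
  have hHv : H ((Equiv.ofBijective H hH.1).symm (C w)) = C w :=
    Equiv.ofBijective_apply_symm_apply ..
  refine ⟨(Equiv.ofBijective H hH.1).symm (C w), fun hv => hw ?_, fun a ha hadj => ?_⟩
  · rw [hHC _ hv] at hHv
    exact C.injective hHv ▸ hv
  · have := hH.2 _ _ hadj
    rw [hHv, hHC a ha] at this
    exact hCA w (by simp) a (by simp [ha]) this
end

section
/- Let G be a graph, I a maximal independent set in G, and suppose every vertex of G has at most k neighbors in I, where k is a positive integer. Then for every finite subset X of G, the set of vertices of I that are in X or adjacent to some vertex of X has size at most k·|X|. Consequently, if I is infinite, every finite subset of G has a co-cone (a vertex outside X adjacent to no element of X). -/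
/-!
A vertex of `I` is met or touched by `x` only if it is `x` itself (when `x ∈ I`, and then, by
independence, nothing else in `I` is touched) or a neighbour of `x` in `I`; either way at most `k`
vertices, since `k ≥ 1`. Summing over `x ∈ X` bounds the vertices of `I` met or touched by `X` by
`k * |X|`, and when `I` is infinite any vertex of `I` outside this finite set is a co-cone over `X`.
-/

section

variable {V : Type*} {G : SimpleGraph V} {I : Set V}

lemma IsIndep.encard_inter_closedNbhd_le (hI : IsIndep G I) {k : ℕ} (hk : 0 < k) {a : V}
    (hdeg : {u ∈ I | G.Adj a u}.encard ≤ k) :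
    {u ∈ I | u = a ∨ G.Adj u a}.encard ≤ k := by
  by_cases ha : a ∈ I
  · have hsub : {u ∈ I | u = a ∨ G.Adj u a} ⊆ {a} := by
      rintro u ⟨huI, rfl | hadj⟩
      · rfl
      · by_contra hua
        exact hI huI ha hua hadj
    calc {u ∈ I | u = a ∨ G.Adj u a}.encard ≤ ({a} : Set V).encard := Set.encard_le_encard hsub
      _ = 1 := Set.encard_singleton a
      _ ≤ k := by exact_mod_cast hk
  · have hsub : {u ∈ I | u = a ∨ G.Adj u a} ⊆ {u ∈ I | G.Adj a u} := by
      rintro u ⟨huI, rfl | hadj⟩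
      · exact absurd huI ha
      · exact ⟨huI, hadj.symm⟩
    exact (Set.encard_le_encard hsub).trans hdeg

lemma IsIndep.encard_inter_closedNbhd_finset_le (hI : IsIndep G I) {k : ℕ} (hk : 0 < k)
    (hdeg : ∀ v : V, {u ∈ I | G.Adj v u}.encard ≤ k) (X : Finset V) :
    {u ∈ I | u ∈ X ∨ ∃ x ∈ X, G.Adj u x}.encard ≤ (k * X.card : ℕ) := by
  have hunion : {u ∈ I | u ∈ X ∨ ∃ x ∈ X, G.Adj u x} = ⋃ x ∈ X, {u ∈ I | u = x ∨ G.Adj u x} := by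
    ext u
    simp only [Set.mem_ofPred_eq, Set.mem_iUnion, exists_prop]
    grind
  calc {u ∈ I | u ∈ X ∨ ∃ x ∈ X, G.Adj u x}.encard
      ≤ ∑ x ∈ X, {u ∈ I | u = x ∨ G.Adj u x}.encard := hunion ▸ X.set_encard_biUnion_le _
    _ ≤ ∑ _x ∈ X, (k : ℕ∞) :=
        Finset.sum_le_sum fun x _ => hI.encard_inter_closedNbhd_le hk (hdeg x)
    _ = (k * X.card : ℕ) := by simp [mul_comm]

end

theorem stmt11_general {V : Type*} (G : SimpleGraph V) (I : Set V) (hI : IsIndep G I)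
    (k : ℕ) (hk : 0 < k)
    (hdeg : ∀ v : V, {u ∈ I | G.Adj v u}.encard ≤ k) :
    (∀ X : Finset V,
      {u ∈ I | u ∈ X ∨ ∃ x ∈ X, G.Adj u x}.encard ≤ (k * X.card : ℕ)) ∧
    (I.Infinite → ∀ X : Finset V, ∃ v : V, v ∉ X ∧ ∀ x ∈ X, ¬ G.Adj v x) := by
  have hbound := hI.encard_inter_closedNbhd_finset_le hk hdeg
  refine ⟨hbound, fun hinf X => ?_⟩
  obtain ⟨v, hvI, hv⟩ := hinf.exists_notMem_finite (Set.finite_of_encard_le_coe (hbound X))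
  simp only [Set.mem_ofPred_eq, not_and, not_or, not_exists] at hv
  exact ⟨v, (hv hvI).1, (hv hvI).2⟩

/-- Counting neighbours in a maximal independent set: if every vertex has at most `k`
neighbours in a maximal independent set `I`, then for finite `X` the portion of `I` met or
touched by `X` has size at most `k * |X|`; hence if `I` is infinite, co-cones exist. -/
theorem stmt11 {V : Type*} (G : SimpleGraph V) (I : Set V) (hI : IsIndep G I)
    (hmax : ∀ v : V, v ∉ I → ∃ u ∈ I, G.Adj v u)
    (k : ℕ) (hk : 0 < k)
    (hdeg : ∀ v : V, {u ∈ I | G.Adj v u}.encard ≤ k) :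
    (∀ X : Finset V,
      {u ∈ I | u ∈ X ∨ ∃ x ∈ X, G.Adj u x}.encard ≤ (k * X.card : ℕ)) ∧
    (I.Infinite → ∀ X : Finset V, ∃ v : V, v ∉ X ∧ ∀ x ∈ X, ¬ G.Adj v x) :=
  stmt11_general G I hI k hk hdeg
end

section
/- Let G be a countable graph such that every finite subset of G has a cone (a vertex adjacent to all of its elements) and every finite subset has a co-cone (a vertex outside the set adjacent to none of its elements). Then G is MB-homogeneous: every injective homomorphism between finite induced subgraphs of G extends to a bimorphism of G. -/
section BackAndForth

variable {V : Type*}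

theorem exists_forall_eqOn_of_chain (D : ℕ → Finset V) (g : ℕ → V → V)
    (hD : ∀ n, D n ⊆ D (n + 1)) (hg : ∀ n, Set.EqOn (g (n + 1)) (g n) (D n))
    (hcover : ∀ x, ∃ n, x ∈ D n) :
    ∃ F : V → V, ∀ n, Set.EqOn F (g n) (D n) := by
  have hmono : Monotone D := monotone_nat_of_le_succ hD
  have hagree : ∀ m n, m ≤ n → Set.EqOn (g n) (g m) (D m) := by
    intro m n hmn
    induction n, hmn using Nat.le_induction with
    | base => exact Set.eqOn_refl _ _
    | succ n hmn ih => exact fun x hx => (hg n (hmono hmn hx)).trans (ih hx)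
  choose N hN using hcover
  refine ⟨fun x => g (N x) x, fun n x hx => ?_⟩
  calc g (N x) x = g (max n (N x)) x := (hagree _ _ (le_max_right _ _) (hN x)).symm
    _ = g n x := hagree _ _ (le_max_left _ _) hx

variable (P : Finset V → (V → V) → Prop)

theorem exists_surjective_extension_of_back_and_forth [Countable V]
    (hP : ∀ (D : Finset V) g g', Set.EqOn g g' D → P D g → P D g')
    (step : ∀ D g, P D g → ∀ a, ∃ D' g', D ⊆ D' ∧ Set.EqOn g' g D ∧ a ∈ D' ∧
      a ∈ g' '' D' ∧ P D' g')
    {S : Finset V} {f : V → V} (hf : P S f) :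
    ∃ F : V → V, Set.EqOn F f S ∧ Function.Surjective F ∧
      ∀ T : Finset V, ∃ D, T ⊆ D ∧ P D F := by
  rcases isEmpty_or_nonempty V with hV | hV
  · exact ⟨f, Set.eqOn_refl _ _, fun y => isEmptyElim y,
      fun T => ⟨S, by simp [Finset.eq_empty_of_isEmpty T], hf⟩⟩
  obtain ⟨e, he⟩ := exists_surjective_nat V
  choose D' g' hext using step
  -- Stage `n + 1` of the chain takes care of the vertex `e n`, both as a source and as a target.
  let c : ℕ → {p : Finset V × (V → V) // P p.1 p.2} := fun n =>
    Nat.rec ⟨(S, f), hf⟩ (fun n p => ⟨(D' _ _ p.2 (e n), g' _ _ p.2 (e n)),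
      (hext _ _ p.2 (e n)).2.2.2.2⟩) n
  have hstep := fun n => hext _ _ (c n).2 (e n)
  choose k hk using he
  have hmem : ∀ x, x ∈ (c (k x + 1)).1.1 := fun x =>
    (hk x).subst (motive := (· ∈ (c (k x + 1)).1.1)) (hstep (k x)).2.2.1
  obtain ⟨F, hF⟩ := exists_forall_eqOn_of_chain (fun n => (c n).1.1) (fun n => (c n).1.2)
    (fun n => (hstep n).1) (fun n => (hstep n).2.1) fun x => ⟨k x + 1, hmem x⟩
  refine ⟨F, hF 0, fun y => ?_, fun T => ?_⟩
  · obtain ⟨x, hx, hxy⟩ := (hstep (k y)).2.2.2.1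
    exact ⟨x, (hF (k y + 1) hx).trans (hxy.trans (hk y))⟩
  · have hmono : Monotone fun n => (c n).1.1 := monotone_nat_of_le_succ fun n => (hstep n).1
    let N := T.sup k + 1
    exact ⟨(c N).1.1, fun x hx => hmono (Nat.succ_le_succ (Finset.le_sup hx)) (hmem x),
      hP _ _ _ (hF N).symm (c N).2⟩

end BackAndForth

section PartialMono

variable {V : Type*}

def IsPartialMono (G : SimpleGraph V) (D : Finset V) (g : V → V) : Prop :=
  Set.InjOn g D ∧ ∀ u ∈ D, ∀ v ∈ D, G.Adj u v → G.Adj (g u) (g v)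

namespace IsPartialMono

variable {G : SimpleGraph V} {D : Finset V} {g : V → V}

theorem congr {g' : V → V} (h : IsPartialMono G D g) (hgg' : Set.EqOn g g' D) :
    IsPartialMono G D g' :=
  ⟨h.1.congr hgg', fun u hu v hv huv => hgg' hu ▸ hgg' hv ▸ h.2 u hu v hv huv⟩

theorem mono {T : Finset V} (h : IsPartialMono G D g) (hTD : T ⊆ D) : IsPartialMono G T g :=
  ⟨h.1.mono (Finset.coe_subset.mpr hTD), fun u hu v hv => h.2 u (hTD hu) v (hTD hv)⟩

theorem update_insert [DecidableEq V] {a b : V} (h : IsPartialMono G D g) (ha : a ∉ D)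
    (hb : b ∉ g '' D) (hadj : ∀ x ∈ D, G.Adj a x → G.Adj b (g x)) :
    IsPartialMono G (insert a D) (Function.update g a b) := by
  have heq : Set.EqOn (Function.update g a b) g D := fun x hx =>
    Function.update_of_ne (ne_of_mem_of_not_mem hx ha) _ _
  refine ⟨?_, fun u hu v hv huv => ?_⟩
  · rw [Finset.coe_insert, Set.injOn_insert ha, heq.image_eq, Function.update_self]
    exact ⟨h.1.congr heq.symm, hb⟩
  rcases Finset.mem_insert.mp hu with rfl | hu' <;> rcases Finset.mem_insert.mp hv with rfl | hv'
  · exact absurd huv G.irrefl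
  · rw [Function.update_self, heq hv']
    exact hadj v hv' huv
  · rw [Function.update_self, heq hu']
    exact (hadj u hu' huv.symm).symm
  · rw [heq hu', heq hv']
    exact h.2 u hu' v hv' huv

theorem exists_extend_mem_domain (hcone : ∀ X : Finset V, ∃ v : V, ∀ x ∈ X, G.Adj v x)
    (h : IsPartialMono G D g) (a : V) :
    ∃ D' g', D ⊆ D' ∧ Set.EqOn g' g D ∧ a ∈ D' ∧ IsPartialMono G D' g' := by
  classical
  by_cases ha : a ∈ D
  · exact ⟨D, g, subset_rfl, Set.eqOn_refl _ _, ha, h⟩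
  obtain ⟨b, hb⟩ := hcone (D.image g)
  have hb_adj : ∀ x ∈ D, G.Adj b (g x) := fun x hx => hb _ (Finset.mem_image_of_mem g hx)
  refine ⟨insert a D, Function.update g a b, Finset.subset_insert _ _,
    fun x hx => Function.update_of_ne (ne_of_mem_of_not_mem hx ha) _ _,
    Finset.mem_insert_self _ _, h.update_insert ha ?_ fun x hx _ => hb_adj x hx⟩
  rintro ⟨x, hx, rfl⟩
  exact G.irrefl (hb_adj x hx)

theorem exists_extend_mem_range
    (hcocone : ∀ X : Finset V, ∃ v : V, v ∉ X ∧ ∀ x ∈ X, ¬ G.Adj v x)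
    (h : IsPartialMono G D g) (b : V) :
    ∃ D' g', D ⊆ D' ∧ Set.EqOn g' g D ∧ b ∈ g' '' D' ∧ IsPartialMono G D' g' := by
  classical
  by_cases hb : b ∈ g '' D
  · exact ⟨D, g, subset_rfl, Set.eqOn_refl _ _, hb, h⟩
  obtain ⟨a, ha, ha_nadj⟩ := hcocone D
  refine ⟨insert a D, Function.update g a b, Finset.subset_insert _ _,
    fun x hx => Function.update_of_ne (ne_of_mem_of_not_mem hx ha) _ _,
    ⟨a, Finset.mem_insert_self _ _, Function.update_self _ _ _⟩,
    h.update_insert ha hb fun x hx hax => absurd hax (ha_nadj x hx)⟩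

theorem exists_extend (hcone : ∀ X : Finset V, ∃ v : V, ∀ x ∈ X, G.Adj v x)
    (hcocone : ∀ X : Finset V, ∃ v : V, v ∉ X ∧ ∀ x ∈ X, ¬ G.Adj v x)
    (h : IsPartialMono G D g) (a : V) :
    ∃ D' g', D ⊆ D' ∧ Set.EqOn g' g D ∧ a ∈ D' ∧ a ∈ g' '' D' ∧ IsPartialMono G D' g' := by
  obtain ⟨D₁, g₁, hDD₁, hgg₁, haD₁, h₁⟩ := h.exists_extend_mem_domain hcone a
  obtain ⟨D₂, g₂, hD₁D₂, hg₁g₂, hag₂, h₂⟩ := h₁.exists_extend_mem_range hcocone a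
  exact ⟨D₂, g₂, hDD₁.trans hD₁D₂, fun x hx => (hg₁g₂ (hDD₁ hx)).trans (hgg₁ hx),
    hD₁D₂ haD₁, hag₂, h₂⟩

end IsPartialMono

theorem isBimorphism_of_surjective_of_isPartialMono {G : SimpleGraph V} {F : V → V}
    (hsurj : Function.Surjective F) (hfin : ∀ T : Finset V, ∃ D, T ⊆ D ∧ IsPartialMono G D F) :
    IsBimorphism G F := by
  classical
  have hpair : ∀ u v, IsPartialMono G {u, v} F := fun u v =>
    have ⟨_, hT, hD⟩ := hfin {u, v}
    hD.mono hT
  refine ⟨⟨fun u v huv => (hpair u v).1 (by simp) (by simp) huv, hsurj⟩, fun u v huv => ?_⟩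
  exact (hpair u v).2 u (by simp) v (by simp) huv

end PartialMono

/-- A countable graph with the cone property and the co-cone property is MB-homogeneous. -/
theorem stmt13 {V : Type*} [Countable V] (G : SimpleGraph V)
    (hcone : ∀ X : Finset V, ∃ v : V, ∀ x ∈ X, G.Adj v x)
    (hcocone : ∀ X : Finset V, ∃ v : V, v ∉ X ∧ ∀ x ∈ X, ¬ G.Adj v x) :
    ∀ (S : Finset V) (f : V → V), Set.InjOn f S →
      (∀ u ∈ S, ∀ v ∈ S, G.Adj u v → G.Adj (f u) (f v)) →
      ∃ F : V → V, IsBimorphism G F ∧ ∀ x ∈ S, F x = f x := by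
  intro S f hinj hhom
  have hf : IsPartialMono G S f := ⟨hinj, hhom⟩
  obtain ⟨F, hFf, hsurj, hfin⟩ :=
    exists_surjective_extension_of_back_and_forth (IsPartialMono G)
      (fun _ _ _ hgg' h => h.congr hgg') (fun _ _ h a => h.exists_extend hcone hcocone a) hf
  exact ⟨F, isBimorphism_of_surjective_of_isPartialMono hsurj hfin, fun x hx => hFf hx⟩
end
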